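/- arXiv:1706.00343 — 4 statements merged into one kernel-verified Lean document; each statement's English description precedes it below -/
import Mathlib

section
/- Assume Vaughan's bound: for all real β, if a, q are coprime positive integers with |β − a/q| < 1/q² then |S₁(β)| ≪ (X q^{−1/2} + X^{1/2} q^{1/2} + X^{4/5})(log X)⁴. Let λ ≠ 0 be real, X ≥ Z ≥ X^{4/5}(log X)⁵, and suppose |S₁(λα)| > Z. Then there exist coprime integers a, q with 1 ≤ q ≪ (X (log X)⁴ / Z)² and |qλα − a| ≪ X (log X)^{10} / Z². -/
/-!
Dirichlet's theorem applied to `λα` with `Q = Z² / (X (log X)¹⁰)` gives `|qλα - a| < 1 / Q` with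
`q ≤ Q` directly. If `q` exceeded `9C² (X (log X)⁴ / Z)²`, each of the three terms of Vaughan's
estimate would be at most `Z / 3`: the first because `q` is large, the second because `q ≤ Q`,
the third because `Z ≥ X^{4/5} (log X)⁵` and `log X ≥ 3C`. This contradicts `|S₁(λα)| > Z`.
-/

open Real MeasureTheory

/-- `e(x) = exp(2πix)` -/
noncomputable def e (x : ℝ) : ℂ := Complex.exp (2 * Real.pi * Complex.I * x)

/-- `S₁(α) = Σ_{δX ≤ p ≤ X} (log p) e(pα)`, sum over primes `p`. -/
noncomputable def S1 (δ X : ℝ) (α : ℝ) : ℂ :=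
  ∑ p ∈ (Finset.Icc 1 (Nat.floor X)).filter
      (fun p : ℕ => p.Prime ∧ δ * X ≤ (p : ℝ) ∧ (p : ℝ) ≤ X),
    (Real.log p : ℂ) * e ((p : ℝ) * α)

lemma e_add_int (x : ℝ) (m : ℤ) : e (x + m) = e x := by
  rw [e, e, Complex.ofReal_add, mul_add, Complex.exp_add, Complex.ofReal_intCast,
    show 2 * (π : ℂ) * Complex.I * m = m * (2 * π * Complex.I) by ring,
    Complex.exp_int_mul_two_pi_mul_I, mul_one]

lemma S1_add_int (δ X β : ℝ) (k : ℤ) : S1 δ X (β + k) = S1 δ X β := by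
  refine Finset.sum_congr rfl fun p _ => ?_
  rw [show (p : ℝ) * (β + k) = p * β + ((p * k : ℤ) : ℝ) by push_cast; ring, e_add_int]

lemma exists_coprime_abs_mul_sub_lt (β : ℝ) {Q : ℝ} (hQ : 1 ≤ Q) :
    ∃ a : ℤ, ∃ q : ℕ, 0 < q ∧ Int.gcd a q = 1 ∧ (q : ℝ) ≤ Q ∧ |q * β - a| < 1 / Q := by
  have hN : 0 < ⌊Q⌋₊ := Nat.floor_pos.2 hQ
  obtain ⟨r, hr, hden⟩ := Real.exists_rat_abs_sub_le_and_den_le β hN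
  have hq : (0 : ℝ) < r.den := by exact_mod_cast r.pos
  refine ⟨r.num, r.den, r.pos, r.reduced,
    (Nat.cast_le.2 hden).trans (Nat.floor_le (by linarith)), ?_⟩
  calc |r.den * β - r.num| = r.den * |β - r| := by
        rw [← abs_of_pos hq, ← abs_mul, abs_of_pos hq, Rat.cast_def]
        congr 1
        field_simp
    _ ≤ r.den * (1 / ((⌊Q⌋₊ + 1) * r.den)) := by gcongr
    _ = 1 / (⌊Q⌋₊ + 1) := by field_simp
    _ < 1 / Q := by gcongr; exact Nat.lt_floor_add_one Q

lemma abs_sub_div_lt_inv_sq {β Q : ℝ} {a : ℤ} {q : ℕ} (hq : 0 < q) (hqQ : (q : ℝ) ≤ Q)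
    (h : |q * β - a| < 1 / Q) : |β - a / q| < 1 / (q : ℝ) ^ 2 := by
  have hq' : (0 : ℝ) < q := by exact_mod_cast hq
  have hsub : β - a / q = (q * β - a) / q := by field_simp
  rw [hsub, abs_div, abs_of_pos hq', div_lt_iff₀ hq']
  calc |q * β - a| < 1 / Q := h
    _ ≤ 1 / q := by gcongr
    _ = 1 / (q : ℝ) ^ 2 * q := by field_simp

noncomputable def vaughanBound (C X q : ℝ) : ℝ :=
  C * (X * q ^ (-(1 : ℝ) / 2) + X ^ ((1 : ℝ) / 2) * q ^ ((1 : ℝ) / 2) + X ^ ((4 : ℝ) / 5)) *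
    Real.log X ^ 4

/-- Shifting `a` by a multiple of `q` shifts `β` by an integer, which `S₁` does not see. -/
lemma norm_S1_le_vaughanBound_of_int {δ C : ℝ}
    (hVaughan : ∀ X ≥ (2 : ℝ), ∀ α : ℝ, ∀ a q : ℕ, 0 < a → 0 < q → Nat.gcd a q = 1 →
      |α - (a : ℝ) / q| < 1 / (q : ℝ) ^ 2 → ‖S1 δ X α‖ ≤ vaughanBound C X q)
    {X β : ℝ} (hX : 2 ≤ X) {a : ℤ} {q : ℕ} (hq : 0 < q) (hcop : Int.gcd a q = 1)
    (happrox : |β - a / q| < 1 / (q : ℝ) ^ 2) : ‖S1 δ X β‖ ≤ vaughanBound C X q := by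
  set k : ℤ := a.natAbs + 1
  have hpos : 0 < a + k * q := by
    have hq1 : (1 : ℤ) ≤ q := by exact_mod_cast hq
    have hk : -a < k := by omega
    nlinarith [mul_le_mul_of_nonneg_left hq1 (show (0 : ℤ) ≤ k by omega)]
  obtain ⟨b, hb⟩ : ∃ b : ℕ, (b : ℤ) = a + k * q := ⟨_, Int.toNat_of_nonneg hpos.le⟩
  have hcop' : Nat.gcd b q = 1 := by
    rw [← Int.gcd_natCast_natCast, hb, ← Int.isCoprime_iff_gcd_eq_one, mul_comm]
    exact (Int.isCoprime_iff_gcd_eq_one.2 hcop).add_mul_left_left k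
  have hb' : (b : ℝ) = a + k * q := by exact_mod_cast hb
  have hshift : β + k - b / q = β - a / q := by
    have : (q : ℝ) ≠ 0 := by positivity
    rw [hb']; field_simp; ring
  rw [← S1_add_int δ X β k]
  exact hVaughan X hX _ b q (by omega) hq hcop' (hshift ▸ happrox)

lemma mul_rpow_neg_half_le {C X L Z q : ℝ} (hC : 0 < C) (hX : 0 < X) (hL : 0 < L) (hZ : 0 < Z)
    (hq : (3 * C * X * L ^ 4 / Z) ^ 2 ≤ q) : C * (X * q ^ (-(1 : ℝ) / 2)) * L ^ 4 ≤ Z / 3 := by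
  have hrpow : q ^ (-(1 : ℝ) / 2) = (√q)⁻¹ := by
    rw [neg_div, Real.rpow_neg ((sq_nonneg _).trans hq), Real.sqrt_eq_rpow]
  calc C * (X * q ^ (-(1 : ℝ) / 2)) * L ^ 4 = C * X * L ^ 4 * (√q)⁻¹ := by rw [hrpow]; ring
    _ ≤ C * X * L ^ 4 * (3 * C * X * L ^ 4 / Z)⁻¹ := by
        gcongr; exact Real.le_sqrt_of_sq_le hq
    _ = Z / 3 := by field_simp

lemma mul_rpow_half_mul_rpow_half_le {C X L Z q : ℝ} (hC : 0 ≤ C) (hX : 0 ≤ X) (hL : 0 < L)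
    (hZ : 0 ≤ Z) (hCL : 3 * C ≤ L) (hq : X * q * L ^ 10 ≤ Z ^ 2) :
    C * (X ^ ((1 : ℝ) / 2) * q ^ ((1 : ℝ) / 2)) * L ^ 4 ≤ Z / 3 := by
  have hsqrt : √(X * q) ≤ Z / L ^ 5 := by
    rw [Real.sqrt_le_left (by positivity), div_pow, ← pow_mul, le_div_iff₀ (by positivity)]
    exact hq
  calc C * (X ^ ((1 : ℝ) / 2) * q ^ ((1 : ℝ) / 2)) * L ^ 4 = C * √(X * q) * L ^ 4 := by
        rw [Real.sqrt_mul hX, Real.sqrt_eq_rpow, Real.sqrt_eq_rpow]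
    _ ≤ C * (Z / L ^ 5) * L ^ 4 := by gcongr
    _ = C * Z / L := by field_simp
    _ ≤ Z / 3 := by rw [div_le_div_iff₀ hL three_pos]; nlinarith

lemma vaughanBound_le {C X Z q : ℝ} (hC : 0 < C) (hX : 0 < X) (hCL : 3 * C ≤ Real.log X)
    (hZ : X ^ ((4 : ℝ) / 5) * Real.log X ^ 5 ≤ Z)
    (hq_lower : 9 * C ^ 2 * (X * Real.log X ^ 4 / Z) ^ 2 ≤ q)
    (hq_upper : X * q * Real.log X ^ 10 ≤ Z ^ 2) : vaughanBound C X q ≤ Z := by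
  set L := Real.log X
  have hL : 0 < L := by linarith
  have hZ0 : 0 < Z := lt_of_lt_of_le (by positivity) hZ
  have h₁ : C * (X * q ^ (-(1 : ℝ) / 2)) * L ^ 4 ≤ Z / 3 :=
    mul_rpow_neg_half_le hC hX hL hZ0 (by convert hq_lower using 1; ring)
  have h₂ := mul_rpow_half_mul_rpow_half_le hC.le hX.le hL hZ0.le hCL hq_upper
  have h₃ : C * X ^ ((4 : ℝ) / 5) * L ^ 4 ≤ Z / 3 := by
    have : 3 * C * (X ^ ((4 : ℝ) / 5) * L ^ 4) ≤ L * (X ^ ((4 : ℝ) / 5) * L ^ 4) := by gcongr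
    linarith
  rw [vaughanBound]
  linarith

lemma mul_pow_ten_le_sq {X L : ℝ} (hX : 1 ≤ X) : X * L ^ 10 ≤ (X ^ ((4 : ℝ) / 5) * L ^ 5) ^ 2 := by
  have hX85 : X ≤ (X ^ ((4 : ℝ) / 5)) ^ 2 := by
    rw [← Real.rpow_natCast, ← Real.rpow_mul (by linarith)]
    exact Real.self_le_rpow_of_one_le hX (by norm_num)
  calc X * L ^ 10 ≤ (X ^ ((4 : ℝ) / 5)) ^ 2 * L ^ 10 := by gcongr
    _ = (X ^ ((4 : ℝ) / 5) * L ^ 5) ^ 2 := by ring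

theorem harman_dirichlet_general (δ : ℝ) (C : ℝ) (hC : 0 < C)
    (hVaughan : ∀ X ≥ (2 : ℝ), ∀ α : ℝ, ∀ a q : ℕ, 0 < a → 0 < q → Nat.gcd a q = 1 →
      |α - (a : ℝ) / q| < 1 / (q : ℝ) ^ 2 →
      ‖S1 δ X α‖ ≤ C * (X * (q : ℝ) ^ (-(1 : ℝ) / 2) + X ^ ((1 : ℝ) / 2) * (q : ℝ) ^ ((1 : ℝ) / 2)
        + X ^ ((4 : ℝ) / 5)) * Real.log X ^ 4)
    (l : ℝ) :
    ∃ C₁ > 0, ∃ C₂ > 0, ∃ X₀ : ℝ, ∀ X ≥ X₀, ∀ α Z : ℝ,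
      X ^ ((4 : ℝ) / 5) * Real.log X ^ 5 ≤ Z → Z ≤ X → Z < ‖S1 δ X (l * α)‖ →
      ∃ a : ℤ, ∃ q : ℕ, 0 < q ∧ Int.gcd a q = 1 ∧
        (q : ℝ) ≤ C₁ * (X * Real.log X ^ 4 / Z) ^ 2 ∧
        |(q : ℝ) * l * α - a| ≤ C₂ * X * Real.log X ^ 10 / Z ^ 2 := by
  refine ⟨9 * C ^ 2 + 1, by positivity, 1, one_pos, Real.exp (3 * C + 3),
    fun X hX α Z hZ _ hS => ?_⟩
  have hX0 : 0 < X := (Real.exp_pos _).trans_le hX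
  have hCL : 3 * C + 3 ≤ Real.log X := (Real.le_log_iff_exp_le hX0).2 hX
  have hX2 : 2 ≤ X := by linarith [Real.add_one_le_exp (3 * C + 3)]
  have hlog : 0 < Real.log X := by linarith
  have hXL : 0 < X * Real.log X ^ 10 := by positivity
  have hQ : 1 ≤ Z ^ 2 / (X * Real.log X ^ 10) := (one_le_div hXL).2 <|
    (mul_pow_ten_le_sq (by linarith)).trans (pow_le_pow_left₀ (by positivity) hZ 2)
  obtain ⟨a, q, hq, hcop, hqQ, happrox⟩ := exists_coprime_abs_mul_sub_lt (l * α) hQ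
  refine ⟨a, q, hq, hcop, ?_, ?_⟩
  · by_contra! hq_large
    have hq_lower : 9 * C ^ 2 * (X * Real.log X ^ 4 / Z) ^ 2 ≤ q := by
      nlinarith [sq_nonneg (X * Real.log X ^ 4 / Z)]
    have hq_upper : X * q * Real.log X ^ 10 ≤ Z ^ 2 := by
      rw [le_div_iff₀ hXL] at hqQ; linarith
    have hS_le := norm_S1_le_vaughanBound_of_int hVaughan hX2 hq hcop
      (abs_sub_div_lt_inv_sq hq hqQ happrox)
    linarith [vaughanBound_le hC hX0 (by linarith) hZ hq_lower hq_upper]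
  · rw [mul_assoc, one_mul, ← one_div_div]
    exact happrox.le

theorem harman_dirichlet (δ : ℝ) (hδ0 : 0 < δ) (hδ1 : δ < 1) (C : ℝ) (hC : 0 < C)
    (hVaughan : ∀ X ≥ (2 : ℝ), ∀ α : ℝ, ∀ a q : ℕ, 0 < a → 0 < q → Nat.gcd a q = 1 →
      |α - (a : ℝ) / q| < 1 / (q : ℝ) ^ 2 →
      ‖S1 δ X α‖ ≤ C * (X * (q : ℝ) ^ (-(1 : ℝ) / 2) + X ^ ((1 : ℝ) / 2) * (q : ℝ) ^ ((1 : ℝ) / 2)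
        + X ^ ((4 : ℝ) / 5)) * Real.log X ^ 4)
    (l : ℝ) (hl : l ≠ 0) :
    ∃ C₁ > 0, ∃ C₂ > 0, ∃ X₀ : ℝ, ∀ X ≥ X₀, ∀ α Z : ℝ,
      X ^ ((4 : ℝ) / 5) * Real.log X ^ 5 ≤ Z → Z ≤ X → Z < ‖S1 δ X (l * α)‖ →
      ∃ a : ℤ, ∃ q : ℕ, 0 < q ∧ Int.gcd a q = 1 ∧
        (q : ℝ) ≤ C₁ * (X * Real.log X ^ 4 / Z) ^ 2 ∧
        |(q : ℝ) * l * α - a| ≤ C₂ * X * Real.log X ^ 10 / Z ^ 2 :=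
  harman_dirichlet_general δ C hC hVaughan l
end

section
/- Let λ ≠ 0 be real, k > 1, 0 < η < 1, R > 1/η, 0 < P < X. With S₁(α) = Σ_{δX ≤ p ≤ X}(log p)e(pα) over primes and K_η(α) = (sin(πηα)/(πα))², one has ∫_{P/X}^{R} |S₁(λα)|² K_η(α) dα ≪ η X log X. -/
open Real MeasureTheory

/-- `K_η(α) = (sin(πηα)/(πα))²` -/
noncomputable def Keta (η α : ℝ) : ℝ := (Real.sin (Real.pi * η * α) / (Real.pi * α)) ^ 2

/-!
After the substitution `x = |l| α` (the modulus of `S₁` is even) the integrand becomes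
`|S₁(x)|² K_η(x / |l|)`. Orthogonality of the `e(px)` gives, on every unit interval,
`∫ |S₁|² = Σ (log p)² ≤ log 4 · X log X` by Chebyshev's bound. On `[n, n + 1]` the weight is
at most `η²` for `n < ⌈1/η⌉` and at most `|l|² / n²` beyond, and both the `≈ 1/η` head terms
and the tail `Σ_{n ≥ 1/η} n⁻²` contribute `O(η)`.
-/

open Finset intervalIntegral ComplexConjugate

lemma e_add (x y : ℝ) : e (x + y) = e x * e y := by
  simp only [e, ← Complex.exp_add]; push_cast; ring_nf

lemma conj_e (x : ℝ) : conj (e x) = e (-x) := by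
  simp only [e, ← Complex.exp_conj, map_mul, Complex.conj_I, Complex.conj_ofReal, map_ofNat]
  push_cast; ring_nf

@[fun_prop]
lemma continuous_e : Continuous e := by unfold e; fun_prop

lemma integral_e_intCast_mul (m : ℤ) (a : ℝ) :
    ∫ x in a..a + 1, e (m * x) = if m = 0 then 1 else 0 := by
  split_ifs with hm
  · simp [hm, e]
  have hc : 2 * π * Complex.I * m ≠ 0 := by simp [pi_ne_zero, hm]
  simp only [e, Complex.ofReal_mul, Complex.ofReal_intCast, ← mul_assoc]
  rw [integral_exp_mul_complex hc, div_eq_zero_iff, sub_eq_zero]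
  left
  rw [Complex.ofReal_add, Complex.ofReal_one, mul_add, mul_one, Complex.exp_add,
    show 2 * π * Complex.I * m = m * (2 * π * Complex.I) by ring, Complex.exp_int_mul_two_pi_mul_I,
    mul_one]

lemma integral_norm_sq_sum_e {ι : Type*} (s : Finset ι) (c : ι → ℂ) {ν : ι → ℤ}
    (hν : Function.Injective ν) (a : ℝ) :
    ∫ x in a..a + 1, ‖∑ i ∈ s, c i * e (ν i * x)‖ ^ 2 = ∑ i ∈ s, ‖c i‖ ^ 2 := by
  classical
  have hexpand (x : ℝ) : ((‖∑ i ∈ s, c i * e (ν i * x)‖ ^ 2 : ℝ) : ℂ) =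
      ∑ i ∈ s, ∑ j ∈ s, c i * conj (c j) * e ((ν i - ν j : ℤ) * x) := by
    rw [Complex.ofReal_pow, ← Complex.mul_conj', map_sum, sum_mul_sum]
    refine sum_congr rfl fun i _ => sum_congr rfl fun j _ => ?_
    rw [map_mul, conj_e, Int.cast_sub, sub_mul, sub_eq_add_neg, e_add]
    ring
  have hint (i j : ι) : IntervalIntegrable (fun x => c i * conj (c j) * e ((ν i - ν j : ℤ) * x))
      volume a (a + 1) :=
    Continuous.intervalIntegrable (by fun_prop) _ _
  apply Complex.ofReal_injective
  rw [← intervalIntegral.integral_ofReal]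
  simp_rw [hexpand]
  rw [integral_finsetSum fun i _ => Continuous.intervalIntegrable (by fun_prop) _ _]
  simp_rw [integral_finsetSum fun j _ => hint _ j, intervalIntegral.integral_const_mul,
    integral_e_intCast_mul, sub_eq_zero, hν.eq_iff, mul_ite, mul_one, mul_zero, sum_ite_eq]
  rw [sum_congr rfl fun i hi => if_pos hi]
  push_cast
  simp_rw [Complex.mul_conj']

noncomputable def S1Primes (δ X : ℝ) : Finset ℕ :=
  (Icc 1 ⌊X⌋₊).filter fun p : ℕ => p.Prime ∧ δ * X ≤ (p : ℝ) ∧ (p : ℝ) ≤ X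

lemma integral_norm_sq_S1 (δ X a : ℝ) :
    ∫ x in a..a + 1, ‖S1 δ X x‖ ^ 2 = ∑ p ∈ S1Primes δ X, log p ^ 2 := by
  have := integral_norm_sq_sum_e (S1Primes δ X) (fun p => (log p : ℂ)) Nat.cast_injective a
  simp only [Int.cast_natCast, Complex.norm_real, norm_eq_abs, sq_abs] at this
  exact this

lemma sum_sq_log_S1Primes_le (δ : ℝ) {X : ℝ} (hX : 1 ≤ X) :
    ∑ p ∈ S1Primes δ X, log p ^ 2 ≤ log 4 * X * log X := by
  have hlog (p) (hp : p ∈ S1Primes δ X) : 0 ≤ log p ∧ log p ≤ log X := by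
    simp only [S1Primes, mem_filter] at hp
    exact ⟨log_natCast_nonneg p, log_le_log (by exact_mod_cast hp.2.1.pos) hp.2.2.2⟩
  calc ∑ p ∈ S1Primes δ X, log p ^ 2 ≤ ∑ p ∈ S1Primes δ X, log X * log p := by
        refine sum_le_sum fun p hp => ?_
        rw [sq]
        exact mul_le_mul_of_nonneg_right (hlog p hp).2 (hlog p hp).1
    _ ≤ log X * Chebyshev.theta X := by
        rw [← mul_sum, Chebyshev.theta]
        refine mul_le_mul_of_nonneg_left (sum_le_sum_of_subset_of_nonneg ?_ ?_) (log_nonneg hX)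
        · intro p hp
          simp only [S1Primes, mem_filter, mem_Icc] at hp
          simp only [mem_filter, mem_Ioc]
          exact ⟨⟨hp.1.1, hp.1.2⟩, hp.2.1⟩
        · exact fun p _ _ => log_natCast_nonneg p
    _ ≤ log X * (log 4 * X) := by
        gcongr
        · exact log_nonneg hX
        · exact Chebyshev.theta_le_log4_mul_x (by linarith)
    _ = log 4 * X * log X := by ring

@[fun_prop]
lemma continuous_S1 (δ X : ℝ) : Continuous (S1 δ X) := by
  unfold S1; fun_prop

lemma norm_S1_neg (δ X x : ℝ) : ‖S1 δ X (-x)‖ = ‖S1 δ X x‖ := by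
  have : S1 δ X (-x) = conj (S1 δ X x) := by
    simp only [S1, map_sum, map_mul, Complex.conj_ofReal, conj_e, mul_neg]
  rw [this, Complex.norm_conj]

lemma Keta_nonneg (η α : ℝ) : 0 ≤ Keta η α := sq_nonneg _

lemma Keta_le_sq (η α : ℝ) : Keta η α ≤ η ^ 2 := by
  rcases eq_or_ne α 0 with rfl | hα
  · simp [Keta]; positivity
  rw [Keta, div_pow, div_le_iff₀ (by positivity)]
  calc sin (π * η * α) ^ 2 ≤ (π * η * α) ^ 2 := sin_sq_le_sq
    _ = η ^ 2 * (π * α) ^ 2 := by ring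

lemma Keta_le_inv_sq (η α : ℝ) : Keta η α ≤ (α ^ 2)⁻¹ := by
  rcases eq_or_ne α 0 with rfl | hα
  · simp [Keta]
  rw [Keta, div_pow, div_le_iff₀ (by positivity)]
  calc sin (π * η * α) ^ 2 ≤ 1 := sin_sq_le_one _
    _ ≤ π ^ 2 := by nlinarith [pi_gt_three]
    _ = (α ^ 2)⁻¹ * (π * α) ^ 2 := by field_simp

@[fun_prop]
lemma measurable_Keta (η : ℝ) : Measurable (Keta η) := by
  unfold Keta; fun_prop

lemma integral_comp_mul_mul_eq_of_even {f w : ℝ → ℝ} (hf : ∀ x, f (-x) = f x) {l : ℝ}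
    (hl : l ≠ 0) (a b : ℝ) :
    ∫ α in a..b, f (l * α) * w α = |l|⁻¹ * ∫ x in |l| * a..|l| * b, f x * w (x / |l|) := by
  have hcomp (α : ℝ) : f (l * α) * w α = f (|l| * α) * w (|l| * α / |l|) := by
    rw [mul_div_cancel_left₀ α (abs_ne_zero.mpr hl)]
    rcases abs_choice l with h | h <;> simp [h, hf]
  simp_rw [hcomp]
  rw [intervalIntegral.integral_comp_mul_left (fun x => f x * w (x / |l|)) (abs_ne_zero.mpr hl),
    smul_eq_mul]

noncomputable def KetaMajorant (η L : ℝ) (n : ℕ) : ℝ :=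
  if n < ⌈1 / η⌉₊ then η ^ 2 else L ^ 2 / n ^ 2

lemma KetaMajorant_nonneg (η L : ℝ) (n : ℕ) : 0 ≤ KetaMajorant η L n := by
  unfold KetaMajorant; split_ifs <;> positivity

lemma Keta_div_le_KetaMajorant {η L x : ℝ} (hη : 0 < η) {n : ℕ} (hnx : n ≤ x) :
    Keta η (x / L) ≤ KetaMajorant η L n := by
  unfold KetaMajorant
  split_ifs with hn
  · exact Keta_le_sq η _
  have hn0 : (0 : ℝ) < n := by
    have : 0 < ⌈1 / η⌉₊ := Nat.ceil_pos.mpr (by positivity)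
    exact_mod_cast this.trans_le (not_lt.mp hn)
  calc Keta η (x / L) ≤ ((x / L) ^ 2)⁻¹ := Keta_le_inv_sq η _
    _ = L ^ 2 / x ^ 2 := by rw [div_pow, inv_div]
    _ ≤ L ^ 2 / n ^ 2 := by gcongr

lemma sum_KetaMajorant_le {η : ℝ} (hη0 : 0 < η) (hη1 : η ≤ 1) (L : ℝ) (N : ℕ) :
    ∑ n ∈ range N, KetaMajorant η L n ≤ 2 * (1 + L ^ 2) * η := by
  set n₀ := ⌈1 / η⌉₊
  have hn₀ : 1 / η ≤ n₀ := Nat.le_ceil _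
  have hn₀_pos : 0 < n₀ := Nat.ceil_pos.mpr (by positivity)
  have hinv : 1 / (n₀ : ℝ) ≤ η := by
    rw [div_le_iff₀ (by positivity)]; rwa [div_le_iff₀ hη0, mul_comm] at hn₀
  have hhead : ∑ _n ∈ (range N).filter (· < n₀), η ^ 2 ≤ 2 * η := by
    rw [sum_const, nsmul_eq_mul]
    calc (#((range N).filter (· < n₀)) : ℝ) * η ^ 2 ≤ n₀ * η ^ 2 := by
          gcongr
          exact_mod_cast (card_le_card fun n hn => mem_range.mpr (mem_filter.mp hn).2).trans
            (card_range n₀).le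
      _ ≤ (1 / η + 1) * η ^ 2 := by gcongr; exact (Nat.ceil_lt_add_one (by positivity)).le
      _ ≤ 2 * η := by field_simp; nlinarith
  have htail : ∑ n ∈ (range N).filter (¬ · < n₀), L ^ 2 / (n : ℝ) ^ 2 ≤ 2 * L ^ 2 * η := by
    calc ∑ n ∈ (range N).filter (¬ · < n₀), L ^ 2 / (n : ℝ) ^ 2
        ≤ ∑ n ∈ Ioo (n₀ - 1) N, L ^ 2 / (n : ℝ) ^ 2 := by
          refine sum_le_sum_of_subset_of_nonneg (fun n hn => ?_) fun _ _ _ => by positivity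
          simp only [mem_filter, mem_range, not_lt] at hn
          exact mem_Ioo.mpr ⟨by omega, hn.1⟩
      _ = L ^ 2 * ∑ n ∈ Ioo (n₀ - 1) N, ((n : ℝ) ^ 2)⁻¹ := by
          rw [mul_sum]; simp only [div_eq_mul_inv]
      _ ≤ L ^ 2 * (2 / n₀) := by
          gcongr
          convert sum_Ioo_inv_sq_le (α := ℝ) (n₀ - 1) N using 2
          rw [Nat.cast_sub hn₀_pos, Nat.cast_one, sub_add_cancel]
      _ = 2 * L ^ 2 * (1 / n₀) := by ring
      _ ≤ 2 * L ^ 2 * η := by gcongr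
  unfold KetaMajorant
  rw [sum_ite]
  linarith

lemma integral_mul_Keta_le {f : ℝ → ℝ} (hf : Continuous f) (hf0 : ∀ x, 0 ≤ f x) {M : ℝ}
    (hM : ∀ n : ℕ, ∫ x in n..n + 1, f x ≤ M) {η L a b : ℝ} (hη0 : 0 < η) (hη1 : η ≤ 1)
    (ha : 0 ≤ a) (hab : a ≤ b) :
    ∫ x in a..b, f x * Keta η (x / L) ≤ 2 * (1 + L ^ 2) * η * M := by
  set g := fun x => f x * Keta η (x / L)
  have hg0 (x : ℝ) : 0 ≤ g x := mul_nonneg (hf0 x) (Keta_nonneg _ _)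
  have hgi (c d : ℝ) : IntervalIntegrable g volume c d := by
    rw [intervalIntegrable_iff]
    refine (hf.intervalIntegrable c d).def'.mul_bdd (c := η ^ 2)
      (by fun_prop : Measurable fun x => Keta η (x / L)).aestronglyMeasurable
      (ae_of_all _ fun x => ?_)
    rw [norm_of_nonneg (Keta_nonneg _ _)]
    exact Keta_le_sq η _
  have hM0 : 0 ≤ M := (integral_nonneg zero_le_one fun x _ => hf0 x).trans (by simpa using hM 0)
  have hunit (n : ℕ) : ∫ x in n..n + 1, g x ≤ KetaMajorant η L n * M := calc
    ∫ x in n..n + 1, g x ≤ ∫ x in n..n + 1, KetaMajorant η L n * f x := by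
      refine integral_mono_on (by linarith) (hgi _ _) ((hf.intervalIntegrable _ _).const_mul _)
        fun x hx => ?_
      rw [mul_comm]
      exact mul_le_mul_of_nonneg_left (Keta_div_le_KetaMajorant hη0 hx.1) (hf0 x)
    _ ≤ KetaMajorant η L n * M := by
      rw [intervalIntegral.integral_const_mul]
      exact mul_le_mul_of_nonneg_left (hM n) (KetaMajorant_nonneg η L n)
  calc ∫ x in a..b, g x ≤ ∫ x in (0 : ℝ)..⌈b⌉₊, g x :=
        integral_mono_interval ha hab (Nat.le_ceil b) (ae_of_all _ hg0) (hgi _ _)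
    _ = ∑ n ∈ range ⌈b⌉₊, ∫ x in n..n + 1, g x := by
        simpa using (sum_integral_adjacent_intervals (a := Nat.cast) fun n _ => hgi _ _).symm
    _ ≤ ∑ n ∈ range ⌈b⌉₊, KetaMajorant η L n * M := sum_le_sum fun n _ => hunit n
    _ = (∑ n ∈ range ⌈b⌉₊, KetaMajorant η L n) * M := (sum_mul ..).symm
    _ ≤ 2 * (1 + L ^ 2) * η * M := by gcongr; exact sum_KetaMajorant_le hη0 hη1 L _

theorem S1_sq_Keta_bound_general (δ : ℝ) (l : ℝ) (hl : l ≠ 0) :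
    ∃ C > 0, ∀ X ≥ (2 : ℝ), ∀ η : ℝ, 0 < η → η < 1 → ∀ R > 1 / η, ∀ P : ℝ, 0 < P → P < X →
      ∫ α in (P / X)..R, ‖S1 δ X (l * α)‖ ^ 2 * Keta η α ≤ C * η * X * Real.log X := by
  have hL : 0 < |l| := abs_pos.mpr hl
  refine ⟨2 * (1 + |l| ^ 2) * log 4 / |l|, by positivity, fun X hX η hη0 hη1 R hR P hP hPX => ?_⟩
  have hPR : P / X ≤ R := by
    have : 1 < 1 / η := by rw [lt_div_iff₀ hη0]; linarith
    linarith [(div_lt_one (by linarith : 0 < X)).mpr hPX]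
  rw [integral_comp_mul_mul_eq_of_even (f := fun x => ‖S1 δ X x‖ ^ 2)
    (fun x => by rw [norm_S1_neg]) hl]
  calc |l|⁻¹ * ∫ x in |l| * (P / X)..|l| * R, ‖S1 δ X x‖ ^ 2 * Keta η (x / |l|)
      ≤ |l|⁻¹ * (2 * (1 + |l| ^ 2) * η * ∑ p ∈ S1Primes δ X, log p ^ 2) := by
        gcongr
        refine integral_mul_Keta_le (by fun_prop) (fun _ => sq_nonneg _)
          (fun n => (integral_norm_sq_S1 δ X n).le) hη0 hη1.le (by positivity) (by gcongr)
    _ ≤ |l|⁻¹ * (2 * (1 + |l| ^ 2) * η * (log 4 * X * log X)) := by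
        gcongr; exact sum_sq_log_S1Primes_le δ (by linarith)
    _ = 2 * (1 + |l| ^ 2) * log 4 / |l| * η * X * Real.log X := by ring

theorem S1_sq_Keta_bound (δ : ℝ) (hδ0 : 0 < δ) (hδ1 : δ < 1) (l : ℝ) (hl : l ≠ 0)
    (k : ℝ) (hk : 1 < k) :
    ∃ C > 0, ∀ X ≥ (2 : ℝ), ∀ η : ℝ, 0 < η → η < 1 → ∀ R > 1 / η, ∀ P : ℝ, 0 < P → P < X →
      ∫ α in (P / X)..R, ‖S1 δ X (l * α)‖ ^ 2 * Keta η α ≤ C * η * X * Real.log X :=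
  S1_sq_Keta_bound_general δ l hl
end

section
/- Let θ be irrational, q a denominator of a convergent of θ, and suppose α, α′ are associated with integer pairs (a₁,q₁,a₂,q₂) and (a₁′,q₁′,a₂′,q₂′) with a₂q₁ ≠ a₂′q₁′ and both |a₂q₁θ − a₁q₂| < 1/(4q) and |a₂′q₁′θ − a₁′q₂′| < 1/(4q). Then |a₂q₁ − a₂′q₁′| ≥ q. -/
open Real

open GenContFract

section Helpers

variable {θ : ℝ}

lemma cs_notTerm (hθ : Irrational θ) (n : ℕ) : ¬(GenContFract.of θ).TerminatedAt n := by
  intro h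
  obtain ⟨q, hq⟩ := (GenContFract.terminates_iff_rat θ).mp ⟨n, h⟩
  exact hθ ⟨q, hq.symm⟩

lemma cs_s_get (hθ : Irrational θ) (n : ℕ) :
    ∃ z : ℤ, 1 ≤ (z : ℝ) ∧ (GenContFract.of θ).s.get? n = some ⟨1, (z : ℝ)⟩ := by
  have hnt := cs_notTerm hθ n
  rw [GenContFract.terminatedAt_iff_s_none] at hnt
  obtain ⟨gp, hgp⟩ := Option.ne_none_iff_exists'.mp hnt
  obtain ⟨ha, z, hb⟩ := GenContFract.of_partNum_eq_one_and_exists_int_partDen_eq hgp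
  refine ⟨z, ?_, ?_⟩
  · rw [← hb]; exact GenContFract.of_one_le_get?_partDen (GenContFract.partDen_eq_s_b hgp)
  · rw [← ha, ← hb]; exact hgp

lemma cs_int (hθ : Irrational θ) (n : ℕ) :
    (∃ a : ℤ, (GenContFract.of θ).nums n = (a : ℝ)) ∧
      (∃ b : ℤ, (GenContFract.of θ).dens n = (b : ℝ)) := by
  induction n using Nat.strong_induction_on with
  | _ n ih =>
    match n with
    | 0 =>
      refine ⟨⟨⌊θ⌋, ?_⟩, ⟨1, ?_⟩⟩
      · rw [GenContFract.zeroth_num_eq_h, GenContFract.of_h_eq_floor]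
      · rw [GenContFract.zeroth_den_eq_one]; norm_num
    | 1 =>
      obtain ⟨z, hz1, hs⟩ := cs_s_get hθ 0
      refine ⟨⟨z * ⌊θ⌋ + 1, ?_⟩, ⟨z, ?_⟩⟩
      · rw [GenContFract.first_num_eq hs, GenContFract.of_h_eq_floor]; push_cast; ring
      · rw [GenContFract.first_den_eq hs]
    | (n + 2) =>
      obtain ⟨⟨a₀, ha₀⟩, ⟨b₀, hb₀⟩⟩ := ih n (by omega)
      obtain ⟨⟨a₁, ha₁⟩, ⟨b₁, hb₁⟩⟩ := ih (n + 1) (by omega)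
      obtain ⟨z, hz1, hs⟩ := cs_s_get hθ (n + 1)
      refine ⟨⟨z * a₁ + a₀, ?_⟩, ⟨z * b₁ + b₀, ?_⟩⟩
      · rw [GenContFract.nums_recurrence hs ha₀ ha₁]; push_cast; ring
      · rw [GenContFract.dens_recurrence hs hb₀ hb₁]; push_cast; ring

lemma cs_den_pos (hθ : Irrational θ) (n : ℕ) : (1 : ℝ) ≤ (GenContFract.of θ).dens n := by
  have h := GenContFract.succ_nth_fib_le_of_nth_den (v := θ) (n := n)
    (by cases n with
        | zero => exact Or.inl rfl
        | succ m => exact Or.inr (cs_notTerm hθ m))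
  calc (1 : ℝ) ≤ (Nat.fib (n + 1) : ℝ) := by
        exact_mod_cast Nat.one_le_iff_ne_zero.mpr (Nat.fib_pos.mpr n.succ_pos).ne'
    _ ≤ _ := h

lemma cs_den_step (hθ : Irrational θ) (n : ℕ) :
    (GenContFract.of θ).dens (n + 1) + (GenContFract.of θ).dens n ≤
      (GenContFract.of θ).dens (n + 2) := by
  obtain ⟨z, hz1, hs⟩ := cs_s_get hθ (n + 1)
  have hrec := GenContFract.dens_recurrence hs rfl rfl
  have h1 : (1 : ℝ) ≤ (GenContFract.of θ).dens (n + 1) := cs_den_pos hθ (n + 1)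
  have h0 : (1 : ℝ) ≤ (GenContFract.of θ).dens n := cs_den_pos hθ n
  rw [hrec]; dsimp only
  nlinarith

lemma cs_sign (hθ : Irrational θ) (n : ℕ) :
    0 < (-1 : ℝ) ^ n * (θ - (GenContFract.of θ).convs n) := by
  have hnt := cs_notTerm hθ n
  obtain ⟨ifp_succ, hstream_succ⟩ := Option.ne_none_iff_exists'.mp
    ((not_iff_not.mpr GenContFract.of_terminatedAt_n_iff_succ_nth_intFractPair_stream_eq_none).mp
      hnt)
  obtain ⟨ifp, hstream, hfr_ne, -⟩ :=
    GenContFract.IntFractPair.succ_nth_stream_eq_some_iff.mp hstream_succ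
  have tmp := GenContFract.sub_convs_eq hstream
  simp only [hfr_ne, if_false] at tmp
  rw [tmp]
  have hB : (0 : ℝ) < ((GenContFract.of θ).contsAux (n + 1)).b := by
    calc (0 : ℝ) < (Nat.fib (n + 1) : ℝ) := by
          exact_mod_cast Nat.fib_pos.mpr n.succ_pos
      _ ≤ _ := GenContFract.fib_le_of_contsAux_b (Or.inr (by
          intro hterm
          exact cs_notTerm hθ n (GenContFract.terminated_stable (by omega) hterm)))
  have hpB : (0 : ℝ) ≤ ((GenContFract.of θ).contsAux n).b := GenContFract.zero_le_of_contsAux_b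
  have hfr : 0 < ifp.fr := lt_of_le_of_ne (GenContFract.IntFractPair.nth_stream_fr_nonneg hstream)
    (Ne.symm hfr_ne)
  set D := ((GenContFract.of θ).contsAux (n + 1)).b *
      (ifp.fr⁻¹ * ((GenContFract.of θ).contsAux (n + 1)).b + ((GenContFract.of θ).contsAux n).b)
      with hD
  have hden : (0 : ℝ) < D := by rw [hD]; positivity
  have hsq : ((-1 : ℝ) ^ n) * ((-1) ^ n / D) = 1 / D := by
    rw [mul_div_assoc', ← pow_add, Even.neg_one_pow ⟨n, by ring⟩]
  rw [hsq]
  positivity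

end Helpers

section Main

variable {θ : ℝ}

lemma cs_sign' (hθ : Irrational θ) (j : ℕ) (pj qj : ℝ)
    (hp : (GenContFract.of θ).nums j = pj) (hq : (GenContFract.of θ).dens j = qj)
    (hqpos : 0 < qj) : 0 < (-1 : ℝ) ^ j * (qj * θ - pj) := by
  have h1 := cs_sign hθ j
  rw [GenContFract.conv_eq_num_div_den, hp, hq] at h1
  have hne : qj ≠ 0 := hqpos.ne'
  have heq : (-1 : ℝ) ^ j * (qj * θ - pj) = qj * ((-1) ^ j * (θ - pj / qj)) := by
    field_simp
  rw [heq]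
  exact mul_pos hqpos h1

lemma cs_legendre (hθ : Irrational θ) (n : ℕ) (m k : ℤ) (hm : m ≠ 0)
    (h : |(m : ℝ) * θ - (k : ℝ)| < 1 / (2 * (GenContFract.of θ).dens n)) :
    (GenContFract.of θ).dens n ≤ |(m : ℝ)| := by
  have hm1 : (1 : ℝ) ≤ |(m : ℝ)| := by exact_mod_cast Int.one_le_abs hm
  by_contra hlt
  push_neg at hlt
  cases n with
  | zero => rw [GenContFract.zeroth_den_eq_one] at hlt; linarith
  | succ N =>
    obtain ⟨pN, hpN⟩ := (cs_int hθ N).1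
    obtain ⟨qN, hqN⟩ := (cs_int hθ N).2
    obtain ⟨pN1, hpN1⟩ := (cs_int hθ (N + 1)).1
    obtain ⟨qN1, hqN1⟩ := (cs_int hθ (N + 1)).2
    set A : ℝ := (pN : ℝ) with hA
    set B : ℝ := (qN : ℝ) with hB
    set A' : ℝ := (pN1 : ℝ) with hA'
    set B' : ℝ := (qN1 : ℝ) with hB'
    have hBpos : (1 : ℝ) ≤ B := by rw [← hqN]; exact cs_den_pos hθ N
    have hB'pos : (1 : ℝ) ≤ B' := by rw [← hqN1]; exact cs_den_pos hθ (N + 1)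
    have hmono : B ≤ B' := by rw [← hqN, ← hqN1]; exact GenContFract.of_den_mono
    have hQ21 : (1 : ℝ) ≤ (GenContFract.of θ).dens (N + 2) := cs_den_pos hθ (N + 2)
    have hQ2 : B' + B ≤ (GenContFract.of θ).dens (N + 2) := by
      rw [← hqN, ← hqN1]; exact cs_den_step hθ N
    rw [hqN1] at h hlt
    set ε : ℝ := (-1 : ℝ) ^ N with hε_def
    have hε : ε * ε = 1 := by
      rw [hε_def, ← pow_add]; exact Even.neg_one_pow ⟨N, by ring⟩
    -- determinant
    have hdet : A * B' - B * A' = -ε := by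
      have hd : (GenContFract.of θ).nums N * (GenContFract.of θ).dens (N + 1) -
          (GenContFract.of θ).dens N * (GenContFract.of θ).nums (N + 1) = (-1) ^ (N + 1) :=
        SimpContFract.determinant (s := SimpContFract.of θ) (cs_notTerm hθ N)
      rw [hpN, hqN, hpN1, hqN1] at hd
      rw [hd, pow_succ, hε_def]
      ring
    -- signs
    have hsign : 0 < ε * (B * θ - A) := cs_sign' hθ N A B hpN hqN (by linarith)
    have hsign1 : 0 < -ε * (B' * θ - A') := by
      have := cs_sign' hθ (N + 1) A' B' hpN1 hqN1 (by linarith)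
      rw [pow_succ, ← hε_def] at this
      calc (0 : ℝ) < ε * -1 * (B' * θ - A') := this
        _ = -ε * (B' * θ - A') := by ring
    -- error bound on level N+1
    have heN1 : |B' * θ - A'| ≤ 1 / (GenContFract.of θ).dens (N + 2) := by
      have habs := GenContFract.abs_sub_convs_le (v := θ) (n := N + 1) (cs_notTerm hθ (N + 1))
      rw [GenContFract.conv_eq_num_div_den, hpN1, hqN1] at habs
      have hrw : B' * θ - A' = (θ - A' / B') * B' := by
        field_simp
      rw [hrw, abs_mul, abs_of_pos (by linarith : (0 : ℝ) < B')]
      calc |θ - A' / B'| * B' ≤ 1 / (B' * (GenContFract.of θ).dens (N + 2)) * B' := by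
            exact mul_le_mul_of_nonneg_right habs (by linarith)
        _ = 1 / (GenContFract.of θ).dens (N + 2) := by
            field_simp
    -- lower bound on error at level N
    have hcross : B' * (B * θ - A) - B * (B' * θ - A') = ε := by
      have : B' * (B * θ - A) - B * (B' * θ - A') = -(A * B' - B * A') := by ring
      rw [this, hdet]; ring
    have hBe : B * |B' * θ - A'| ≤ 1 / 2 := by
      have h1 : B * |B' * θ - A'| ≤ B * (1 / (GenContFract.of θ).dens (N + 2)) :=
        mul_le_mul_of_nonneg_left heN1 (by linarith)
      have h2 : B * (1 / (GenContFract.of θ).dens (N + 2)) ≤ 1 / 2 := by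
        rw [mul_one_div, div_le_div_iff₀ (by linarith) (by norm_num)]
        linarith
      linarith
    have heN : 1 / (2 * B') ≤ |B * θ - A| := by
      have h1 : (1 : ℝ) ≤ B' * |B * θ - A| + B * |B' * θ - A'| := by
        have e1 : (1 : ℝ) = |B' * (B * θ - A) - B * (B' * θ - A')| := by
          rw [hcross, hε_def, abs_pow, abs_neg, abs_one, one_pow]
        rw [e1]
        calc |B' * (B * θ - A) - B * (B' * θ - A')|
            ≤ |B' * (B * θ - A)| + |B * (B' * θ - A')| := abs_sub _ _
          _ = B' * |B * θ - A| + B * |B' * θ - A'| := by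
              rw [abs_mul, abs_mul, abs_of_pos (by linarith : (0:ℝ) < B'),
                abs_of_pos (by linarith : (0:ℝ) < B)]
      have h2 : 1 / 2 ≤ B' * |B * θ - A| := by linarith
      rw [div_le_iff₀ (by linarith : (0 : ℝ) < 2 * B')]
      nlinarith
    -- Cramer decomposition
    obtain ⟨x, y, hxR, hyR⟩ : ∃ x y : ℤ, (x : ℝ) = ε * ((m : ℝ) * A' - (k : ℝ) * B') ∧
        (y : ℝ) = ε * ((k : ℝ) * B - (m : ℝ) * A) :=
      ⟨(-1) ^ N * (m * pN1 - k * qN1), (-1) ^ N * (k * qN - m * pN),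
        by rw [hA', hB', hε_def]; push_cast; ring,
        by rw [hA, hB, hε_def]; push_cast; ring⟩
    have hxQ : (x : ℝ) * B + (y : ℝ) * B' = (m : ℝ) := by
      rw [hxR, hyR]
      linear_combination (-(ε * (m : ℝ))) * hdet + (m : ℝ) * hε
    have hxP : (x : ℝ) * A + (y : ℝ) * A' = (k : ℝ) := by
      rw [hxR, hyR]
      linear_combination (-(ε * (k : ℝ))) * hdet + (k : ℝ) * hε
    have hsum : (m : ℝ) * θ - (k : ℝ) = (x : ℝ) * (B * θ - A) + (y : ℝ) * (B' * θ - A') := by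
      rw [← hxQ, ← hxP]; ring
    by_cases hy0 : y = 0
    · have hx0 : x ≠ 0 := by
        intro hx0
        apply hm
        have : (m : ℝ) = 0 := by rw [← hxQ, hx0, hy0]; push_cast; ring
        exact_mod_cast this
      have hx1 : (1 : ℝ) ≤ |(x : ℝ)| := by exact_mod_cast Int.one_le_abs hx0
      have hfinal : 1 / (2 * B') ≤ |(m : ℝ) * θ - (k : ℝ)| := by
        rw [hsum, hy0]
        push_cast
        rw [zero_mul, add_zero, abs_mul]
        calc 1 / (2 * B') ≤ |B * θ - A| := heN
          _ ≤ |(x : ℝ)| * |B * θ - A| := le_mul_of_one_le_left (abs_nonneg _) hx1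
      linarith
    · by_cases hx0 : x = 0
      · have hy1 : (1 : ℝ) ≤ |(y : ℝ)| := by exact_mod_cast Int.one_le_abs hy0
        have : B' ≤ |(x : ℝ) * B + (y : ℝ) * B'| := by
          rw [hx0]
          push_cast
          rw [zero_mul, zero_add, abs_mul, abs_of_pos (by linarith : (0:ℝ) < B')]
          exact le_mul_of_one_le_left (by linarith) hy1
        rw [hxQ] at this
        linarith
      · have hx1 : (1 : ℝ) ≤ |(x : ℝ)| := by exact_mod_cast Int.one_le_abs hx0
        have hxy : (x : ℝ) * (y : ℝ) < 0 := by
          rcases lt_trichotomy ((x : ℝ) * (y : ℝ)) 0 with hlt' | heq | hgt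
          · exact hlt'
          · exfalso
            rcases mul_eq_zero.mp heq with h0 | h0
            · exact hx0 (by exact_mod_cast h0)
            · exact hy0 (by exact_mod_cast h0)
          · exfalso
            have hmabs : (m : ℝ) ≤ |(m : ℝ)| := le_abs_self _
            have hmabs' : -(m : ℝ) ≤ |(m : ℝ)| := neg_le_abs _
            rcases mul_pos_iff.mp hgt with ⟨hxp, hyp⟩ | ⟨hxn, hyn⟩
            · have hxZ : (0:ℤ) < x := by exact_mod_cast hxp
              have hyZ : (0:ℤ) < y := by exact_mod_cast hyp
              have hxZ1 : (1:ℤ) ≤ x := by omega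
              have hyZ1 : (1:ℤ) ≤ y := by omega
              have hx1' : (1 : ℝ) ≤ (x : ℝ) := by exact_mod_cast hxZ1
              have hy1' : (1 : ℝ) ≤ (y : ℝ) := by exact_mod_cast hyZ1
              have t1 : B ≤ (x : ℝ) * B := le_mul_of_one_le_left (by linarith) hx1'
              have t2 : B' ≤ (y : ℝ) * B' := le_mul_of_one_le_left (by linarith) hy1'
              linarith
            · have hxZ : x < (0:ℤ) := by exact_mod_cast hxn
              have hyZ : y < (0:ℤ) := by exact_mod_cast hyn
              have hxZ1 : x ≤ (-1:ℤ) := by omega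
              have hyZ1 : y ≤ (-1:ℤ) := by omega
              have hx1' : (x : ℝ) ≤ -1 := by exact_mod_cast hxZ1
              have hy1' : (y : ℝ) ≤ -1 := by exact_mod_cast hyZ1
              have t1 : (x : ℝ) * B ≤ -1 * B := mul_le_mul_of_nonneg_right hx1' (by linarith)
              have t2 : (y : ℝ) * B' ≤ -1 * B' := mul_le_mul_of_nonneg_right hy1' (by linarith)
              linarith
        have hee : (B * θ - A) * (B' * θ - A') < 0 := by
          have h4 : (ε * (B * θ - A)) * (-ε * (B' * θ - A')) =
              -((ε * ε) * ((B * θ - A) * (B' * θ - A'))) := by ring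
          have h5 := mul_pos hsign hsign1
          rw [h4, hε, one_mul] at h5
          linarith
        have hprod : 0 < ((x : ℝ) * (B * θ - A)) * ((y : ℝ) * (B' * θ - A')) := by
          have h3 : ((x : ℝ) * (B * θ - A)) * ((y : ℝ) * (B' * θ - A')) =
              ((x : ℝ) * (y : ℝ)) * ((B * θ - A) * (B' * θ - A')) := by ring
          rw [h3]
          exact mul_pos_of_neg_of_neg hxy hee
        have habs2 : |(x : ℝ) * (B * θ - A)| ≤
            |(x : ℝ) * (B * θ - A) + (y : ℝ) * (B' * θ - A')| := by
          rcases mul_pos_iff.mp hprod with ⟨ha, hb⟩ | ⟨ha, hb⟩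
          · rw [abs_of_pos ha, abs_of_pos (by linarith : (0:ℝ) < _ + _)]
            linarith
          · rw [abs_of_neg ha, abs_of_neg (by linarith : _ + _ < (0:ℝ))]
            linarith
        have hfinal : 1 / (2 * B') ≤ |(m : ℝ) * θ - (k : ℝ)| := by
          rw [hsum]
          calc 1 / (2 * B') ≤ |B * θ - A| := heN
            _ ≤ |(x : ℝ)| * |B * θ - A| := le_mul_of_one_le_left (abs_nonneg _) hx1
            _ = |(x : ℝ) * (B * θ - A)| := (abs_mul _ _).symm
            _ ≤ _ := habs2
        linarith

end Main

theorem convergent_spacing (θ : ℝ) (hθ : Irrational θ) (q : ℕ) (hq : 0 < q)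
    (n : ℕ) (hconv : (q : ℝ) = (GenContFract.of θ).dens n)
    (a₁ q₁ a₂ q₂ a₁' q₁' a₂' q₂' : ℤ)
    (hne : a₂ * q₁ ≠ a₂' * q₁')
    (h : |(a₂ * q₁ : ℤ) * θ - (a₁ * q₂ : ℤ)| < 1 / (4 * q))
    (h' : |(a₂' * q₁' : ℤ) * θ - (a₁' * q₂' : ℤ)| < 1 / (4 * q)) :
    (q : ℝ) ≤ |(a₂ * q₁ - a₂' * q₁' : ℤ)| := by
  have hQpos : (0 : ℝ) < (q : ℝ) := by exact_mod_cast hq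
  set m : ℤ := a₂ * q₁ - a₂' * q₁' with hm_def
  set k : ℤ := a₁ * q₂ - a₁' * q₂' with hk_def
  have hm : m ≠ 0 := sub_ne_zero.mpr hne
  have hkey : |(m : ℝ) * θ - (k : ℝ)| < 1 / (2 * (q : ℝ)) := by
    have hrw : (m : ℝ) * θ - (k : ℝ) =
        (((a₂ * q₁ : ℤ) : ℝ) * θ - ((a₁ * q₂ : ℤ) : ℝ)) -
          (((a₂' * q₁' : ℤ) : ℝ) * θ - ((a₁' * q₂' : ℤ) : ℝ)) := by
      rw [hm_def, hk_def]; push_cast; ring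
    rw [hrw]
    calc |(((a₂ * q₁ : ℤ) : ℝ) * θ - ((a₁ * q₂ : ℤ) : ℝ)) -
          (((a₂' * q₁' : ℤ) : ℝ) * θ - ((a₁' * q₂' : ℤ) : ℝ))|
        ≤ |((a₂ * q₁ : ℤ) : ℝ) * θ - ((a₁ * q₂ : ℤ) : ℝ)| +
          |((a₂' * q₁' : ℤ) : ℝ) * θ - ((a₁' * q₂' : ℤ) : ℝ)| := abs_sub _ _
      _ < 1 / (4 * q) + 1 / (4 * q) := add_lt_add h h'
      _ = 1 / (2 * q) := by field_simp; ring
  rw [hconv] at hkey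
  have hfin := cs_legendre hθ n m k hm hkey
  rw [← hconv] at hfin
  calc (q : ℝ) ≤ |(m : ℝ)| := hfin
    _ = ((|m| : ℤ) : ℝ) := by push_cast; ring
end

section
/- Let λ₁ > 0, λ₂ > 0, λ₃ < 0 be reals with |λ₃| ≥ max{λ₁, λ₂}, let η > 0, X ≥ 1, and δ > 0 small enough (in terms of the λ_j). Set a_j = 2δ|λ₃|/λ_j and b_j = (3/2)a_j for j = 1,2. Then for every (u₁,u₂) ∈ [a₁X, b₁X] × [a₂X, b₂X], provided η ≤ δ|λ₃|X, one has ∫_{δX}^{(1−δ)X} max{0, η − |λ₁u₁ + λ₂u₂ + λ₃u₃|} du₃ = η²/|λ₃| ≫ η². -/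
/-!
As a function of `u₃`, `max 0 (η - |l₁u₁ + l₂u₂ + l₃u₃|)` is a tent of height `η` and slope `|l₃|`
centred at `c = (l₁u₁ + l₂u₂) / |l₃|`, so its integral over any interval containing its support
`[c - η/|l₃|, c + η/|l₃|]` is the area `η² / |l₃|`. The constraints on `u₁, u₂` put `c` in
`[4δX, 6δX]`, and `η ≤ δ|l₃|X` makes the half-width at most `δX`, so for `δ ≤ 1/8` the support
lies in `[δX, (1 - δ)X]`.
-/

open Real MeasureTheory Set

section Tent

variable {L η : ℝ}

lemma max_zero_sub_mul_eq_zero (hL : 0 < L) {x : ℝ} (hx : η / L ≤ x) :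
    max 0 (η - L * x) = 0 :=
  max_eq_left <| sub_nonpos.mpr <| (div_le_iff₀' hL).mp hx

lemma integral_tent_Ioi (hL : 0 < L) (hη : 0 ≤ η) :
    ∫ x in Ioi 0, max 0 (η - L * x) = η ^ 2 / (2 * L) := by
  have hr : 0 ≤ η / L := div_nonneg hη hL.le
  rw [setIntegral_eq_of_subset_of_forall_sdiff_eq_zero measurableSet_Ioi Ioc_subset_Ioi_self,
    ← intervalIntegral.integral_of_le hr]
  · rw [intervalIntegral.integral_congr (g := fun x => η - L * x)]
    · rw [intervalIntegral.integral_sub intervalIntegrable_const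
        ((continuous_const_mul L).intervalIntegrable _ _), intervalIntegral.integral_const,
        intervalIntegral.integral_const_mul, integral_id, smul_eq_mul]
      field_simp
      ring
    · intro x hx
      rw [uIcc_of_le hr] at hx
      exact max_eq_right <| sub_nonneg.mpr <| (le_div_iff₀' hL).mp hx.2
  · rintro x ⟨hx0, hxr⟩
    exact max_zero_sub_mul_eq_zero hL (le_of_not_ge fun h => hxr ⟨hx0, h⟩)

lemma integral_tent (hL : 0 < L) (hη : 0 ≤ η) (c : ℝ) :
    ∫ x, max 0 (η - L * |x - c|) = η ^ 2 / L := by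
  rw [integral_sub_right_eq_self (fun x => max 0 (η - L * |x|)),
    integral_comp_abs (f := fun x => max 0 (η - L * x)), integral_tent_Ioi hL hη]
  field_simp

lemma intervalIntegral_tent {a b c : ℝ} (hL : 0 < L) (hη : 0 ≤ η)
    (ha : a ≤ c - η / L) (hb : c + η / L ≤ b) :
    ∫ x in a..b, max 0 (η - L * |x - c|) = η ^ 2 / L := by
  rw [intervalIntegral.integral_eq_integral_of_support_subset, integral_tent hL hη]
  refine Function.support_subset_iff'.mpr fun x hx => max_zero_sub_mul_eq_zero hL (le_abs'.mpr ?_)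
  rw [mem_Ioc, not_and_or, not_lt, not_le] at hx
  rcases hx with h | h
  exacts [Or.inl (by linarith), Or.inr (by linarith)]

end Tent

lemma abs_add_mul_eq_mul_abs_sub {l : ℝ} (hl : l ≠ 0) (s u : ℝ) :
    |s + l * u| = |l| * |u - -s / l| := by
  rw [← abs_mul]
  congr 1
  field_simp
  ring

lemma mul_mem_Icc_of_mem_Icc_div {l A k X u : ℝ} (hl : 0 < l)
    (hu : u ∈ Icc (A / l * X) (k * (A / l) * X)) :
    l * u ∈ Icc (A * X) (k * A * X) := by
  constructor
  · calc A * X = l * (A / l * X) := by field_simp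
      _ ≤ l * u := mul_le_mul_of_nonneg_left hu.1 hl.le
  · calc l * u ≤ l * (k * (A / l) * X) := mul_le_mul_of_nonneg_left hu.2 hl.le
      _ = k * A * X := by field_simp

theorem major_arc_core_general (l₁ l₂ l₃ : ℝ) (h₁ : 0 < l₁) (h₂ : 0 < l₂) (h₃ : l₃ < 0) :
    ∃ δ₀ > 0, ∀ δ : ℝ, 0 < δ → δ ≤ δ₀ → ∀ X ≥ (1 : ℝ), ∀ η : ℝ, 0 < η →
      η ≤ δ * |l₃| * X →
      ∀ u₁ u₂ : ℝ,
        u₁ ∈ Set.Icc ((2 * δ * |l₃| / l₁) * X) ((3 / 2) * (2 * δ * |l₃| / l₁) * X) →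
        u₂ ∈ Set.Icc ((2 * δ * |l₃| / l₂) * X) ((3 / 2) * (2 * δ * |l₃| / l₂) * X) →
        ∫ u₃ in (δ * X)..((1 - δ) * X), max 0 (η - |l₁ * u₁ + l₂ * u₂ + l₃ * u₃|)
          = η ^ 2 / |l₃| := by
  refine ⟨1 / 8, by norm_num, fun δ hδ hδ₀ X hX η hη hηX u₁ u₂ hu₁ hu₂ => ?_⟩
  have hL : 0 < |l₃| := abs_pos.mpr h₃.ne
  set c := -(l₁ * u₁ + l₂ * u₂) / l₃
  have hc : c * |l₃| = l₁ * u₁ + l₂ * u₂ := by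
    rw [abs_of_neg h₃, mul_neg, div_mul_cancel₀ _ h₃.ne, neg_neg]
  have hv₁ := mul_mem_Icc_of_mem_Icc_div h₁ hu₁
  have hv₂ := mul_mem_Icc_of_mem_Icc_div h₂ hu₂
  have hc_lo : 4 * δ * X ≤ c := by nlinarith [hv₁.1, hv₂.1]
  have hc_hi : c ≤ 6 * δ * X := by nlinarith [hv₁.2, hv₂.2]
  have hwidth : η / |l₃| ≤ δ * X := (div_le_iff₀ hL).mpr (by linarith)
  simp only [abs_add_mul_eq_mul_abs_sub h₃.ne]
  exact intervalIntegral_tent hL hη.le (by linarith) (by nlinarith)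

theorem major_arc_core (l₁ l₂ l₃ : ℝ) (h₁ : 0 < l₁) (h₂ : 0 < l₂) (h₃ : l₃ < 0)
    (hmax : max l₁ l₂ ≤ |l₃|) :
    ∃ δ₀ > 0, ∀ δ : ℝ, 0 < δ → δ ≤ δ₀ → ∀ X ≥ (1 : ℝ), ∀ η : ℝ, 0 < η →
      η ≤ δ * |l₃| * X →
      ∀ u₁ u₂ : ℝ,
        u₁ ∈ Set.Icc ((2 * δ * |l₃| / l₁) * X) ((3 / 2) * (2 * δ * |l₃| / l₁) * X) →
        u₂ ∈ Set.Icc ((2 * δ * |l₃| / l₂) * X) ((3 / 2) * (2 * δ * |l₃| / l₂) * X) →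
        ∫ u₃ in (δ * X)..((1 - δ) * X), max 0 (η - |l₁ * u₁ + l₂ * u₂ + l₃ * u₃|)
          = η ^ 2 / |l₃| :=
  major_arc_core_general l₁ l₂ l₃ h₁ h₂ h₃
end
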